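/- Let n ∈ ℕ, L = 1/√3 and ω* = (2n+1)π/(2L). Define φ : [0, 2L] → ℝ using the characteristic-function formulas with data u₀ = 1, v₀ = 0, v₀' = (−1)ⁿ·ω*, i.e. φ(s) = −((−1)ⁿ/2)·sin(ω*(L − s)) for s ∈ [0, L] and φ(s) = sin(ω*(s − L))/sin(ω*L) for s ∈ [L, 2L]. Then φ(s) = −cos(ω*·s)/2 for all s ∈ [0, L] and φ(s) = −cos(ω*·s) for all s ∈ [L, 2L]; the set {t ∈ [0, 2L) : φ(t) = 0} is exactly {(2q+1)L/(2n+1) : q ∈ ℕ, 0 ≤ q ≤ 2n} and has exactly 2n+1 elements; and the set {t ∈ [0, 2L) : sin(ω*·t) = 0} of zeros of the piecewise derivative of φ is exactly {2qL/(2n+1) : q ∈ ℕ, 0 ≤ q ≤ 2n} and has exactly 2n+1 elements. (This is the case β ∈ (1/3, 1/2) of the characteristic function at the Dirac frequency ω* = ωₙ*.) -/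

import Mathlib

open Real

/-- The edge length `L = 1/√3`. -/
noncomputable def L : ℝ := 1 / Real.sqrt 3

/-- The Dirac frequency `ωₙ* = (2n+1)π/(2L)`. -/
noncomputable def ωstar (n : ℕ) : ℝ := (2 * n + 1) * π / (2 * L)

/-- The characteristic function at the Dirac frequency with data
`u₀ = 1, v₀ = 0, v₀' = (−1)ⁿ·ω*`: `φ(s) = −((−1)ⁿ/2)·sin(ω*(L − s))` on `[0, L]`
and `φ(s) = sin(ω*(s − L))/sin(ω*L)` on `[L, 2L]`. -/
noncomputable def φ (n : ℕ) (s : ℝ) : ℝ :=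
  if s ≤ L then -(((-1 : ℝ) ^ n / 2) * Real.sin (ωstar n * (L - s)))
  else Real.sin (ωstar n * (s - L)) / Real.sin (ωstar n * L)

/-
On `[0, L]` and `[L, 2L]` the two branches of `φ` are, up to the constants `-1/2` and `-1`, the
same function `cos (ω* s)`: expand `sin (ω* (L - s))` and `sin (ω* (s - L))` by the subtraction
formula and use `ω* L = nπ + π/2`, so that `sin (ω* L) = (-1)ⁿ` and `cos (ω* L) = 0`.  Hence the
zeros of `φ` on `[0, 2L)` are those of `cos (ω* t)`, and the zeros of `sin (ω* t)` there are the
remaining points of the grid of step `h = L/(2n+1)`, where `ω* h = π/2`: odd resp. even multiples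
`(2q + c) h` with `0 ≤ q ≤ 2n`, since `2L = 2(2n+1) h`.
-/

theorem setOf_mem_Ico_exists_int_eq_image {a c : ℝ} (M : ℕ) (ha : 0 < a) (hc₀ : 0 ≤ c)
    (hc₂ : c < 2) :
    {t ∈ Set.Ico 0 (2 * (M + 1) * a) | ∃ k : ℤ, t = (2 * k + c) * a} =
      (fun q : ℕ => (2 * q + c) * a) '' {q | q ≤ M} := by
  ext t
  simp only [Set.mem_ofPred_eq, Set.mem_image, Set.mem_Ico]
  constructor
  · rintro ⟨⟨h₀, hlt⟩, k, rfl⟩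
    have hk₀ : (-1 : ℤ) < k := by
      exact_mod_cast (by nlinarith [nonneg_of_mul_nonneg_left h₀ ha] : (-1 : ℝ) < k)
    have hkM : k < M + 1 := by
      exact_mod_cast (by nlinarith [lt_of_mul_lt_mul_right hlt ha.le] : (k : ℝ) < M + 1)
    lift k to ℕ using by omega
    exact ⟨k, by omega, rfl⟩
  · rintro ⟨q, hq, rfl⟩
    have hqM : (q : ℝ) ≤ M := by exact_mod_cast hq
    exact ⟨⟨by positivity, by nlinarith⟩, q, by push_cast; rfl⟩

theorem ncard_image_mul_two_add_mul {a : ℝ} (c : ℝ) (M : ℕ) (ha : a ≠ 0) :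
    ((fun q : ℕ => (2 * q + c) * a) '' {q | q ≤ M}).ncard = M + 1 := by
  rw [Set.ncard_image_of_injective _ fun p q hpq => ?_]
  · exact Set.ncard_Iic_nat M
  · simpa using (mul_right_cancel₀ ha hpq)

lemma L_pos : 0 < L := by
  unfold L; positivity

lemma ωstar_pos (n : ℕ) : 0 < ωstar n := by
  have := L_pos
  unfold ωstar; positivity

lemma ωstar_mul_div (n : ℕ) : ωstar n * (L / (2 * n + 1)) = π / 2 := by
  unfold ωstar; field_simp [L_pos.ne']

lemma ωstar_mul_L (n : ℕ) : ωstar n * L = n * π + π / 2 := by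
  have h := ωstar_mul_div n
  rw [mul_div_assoc'] at h
  field_simp at h ⊢
  linarith

lemma sin_ωstar_mul_L (n : ℕ) : sin (ωstar n * L) = (-1) ^ n := by
  simpa [ωstar_mul_L, sin_add_pi_div_two] using cos_nat_mul_pi n

lemma cos_ωstar_mul_L (n : ℕ) : cos (ωstar n * L) = 0 := by
  rw [ωstar_mul_L, cos_add_pi_div_two, sin_nat_mul_pi, neg_zero]

lemma φ_of_le {n : ℕ} {s : ℝ} (hs : s ≤ L) : φ n s = -(cos (ωstar n * s) / 2) := by
  rw [φ, if_pos hs, mul_sub, sin_sub, sin_ωstar_mul_L, cos_ωstar_mul_L]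
  have hsq : ((-1 : ℝ) ^ n) ^ 2 = 1 := by rw [← pow_mul, pow_mul', neg_one_sq, one_pow]
  linear_combination (-(cos (ωstar n * s) / 2)) * hsq

lemma φ_of_ge {n : ℕ} {s : ℝ} (hs : L ≤ s) : φ n s = -cos (ωstar n * s) := by
  rcases hs.eq_or_lt with rfl | hlt
  · simp [φ, cos_ωstar_mul_L]
  rw [φ, if_neg hlt.not_ge, mul_sub, sin_sub, sin_ωstar_mul_L, cos_ωstar_mul_L]
  field_simp
  ring

lemma φ_eq_zero_iff (n : ℕ) (s : ℝ) : φ n s = 0 ↔ cos (ωstar n * s) = 0 := by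
  rcases le_total s L with hs | hs
  · simp [φ_of_le hs]
  · simp [φ_of_ge hs]

lemma cos_ωstar_mul_eq_zero_iff (n : ℕ) (t : ℝ) :
    cos (ωstar n * t) = 0 ↔ ∃ k : ℤ, t = (2 * k + 1) * (L / (2 * n + 1)) := by
  refine cos_eq_zero_iff.trans (exists_congr fun k => ?_)
  rw [show (2 * k + 1) * π / 2 = ωstar n * ((2 * k + 1) * (L / (2 * n + 1))) by
    rw [mul_left_comm, ωstar_mul_div]; ring, mul_right_inj' (ωstar_pos n).ne']

lemma sin_ωstar_mul_eq_zero_iff (n : ℕ) (t : ℝ) :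
    sin (ωstar n * t) = 0 ↔ ∃ k : ℤ, t = 2 * k * (L / (2 * n + 1)) := by
  refine sin_eq_zero_iff.trans (exists_congr fun k => ?_)
  rw [eq_comm, show k * π = ωstar n * (2 * k * (L / (2 * n + 1))) by
    rw [mul_left_comm, ωstar_mul_div]; ring, mul_right_inj' (ωstar_pos n).ne']

theorem stmt_17 (n : ℕ) :
    (∀ s ∈ Set.Icc (0 : ℝ) L, φ n s = -(Real.cos (ωstar n * s) / 2)) ∧
    (∀ s ∈ Set.Icc L (2 * L), φ n s = -Real.cos (ωstar n * s)) ∧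
    {t ∈ Set.Ico (0 : ℝ) (2 * L) | φ n t = 0} =
      (fun q : ℕ => (2 * q + 1) * L / (2 * n + 1)) '' {q : ℕ | q ≤ 2 * n} ∧
    {t ∈ Set.Ico (0 : ℝ) (2 * L) | φ n t = 0}.ncard = 2 * n + 1 ∧
    {t ∈ Set.Ico (0 : ℝ) (2 * L) | Real.sin (ωstar n * t) = 0} =
      (fun q : ℕ => 2 * q * L / (2 * n + 1)) '' {q : ℕ | q ≤ 2 * n} ∧
    {t ∈ Set.Ico (0 : ℝ) (2 * L) | Real.sin (ωstar n * t) = 0}.ncard = 2 * n + 1 := by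
  have hstep : 0 < L / (2 * n + 1) := div_pos L_pos (by positivity)
  have hlen : 2 * L = 2 * ((2 * n : ℕ) + 1) * (L / (2 * n + 1)) := by
    push_cast; field_simp
  have hzeros : {t ∈ Set.Ico (0 : ℝ) (2 * L) | φ n t = 0} =
      (fun q : ℕ => (2 * q + 1) * L / (2 * n + 1)) '' {q : ℕ | q ≤ 2 * n} := by
    simp_rw [φ_eq_zero_iff, cos_ωstar_mul_eq_zero_iff, hlen, mul_div_assoc]
    exact setOf_mem_Ico_exists_int_eq_image _ hstep zero_le_one one_lt_two
  have hcrit : {t ∈ Set.Ico (0 : ℝ) (2 * L) | sin (ωstar n * t) = 0} =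
      (fun q : ℕ => 2 * q * L / (2 * n + 1)) '' {q : ℕ | q ≤ 2 * n} := by
    simp_rw [sin_ωstar_mul_eq_zero_iff, hlen, mul_div_assoc]
    simpa using setOf_mem_Ico_exists_int_eq_image (2 * n) hstep le_rfl two_pos
  refine ⟨fun s hs => φ_of_le hs.2, fun s hs => φ_of_ge hs.1, hzeros, ?_, hcrit, ?_⟩
  · simpa only [hzeros, mul_div_assoc] using ncard_image_mul_two_add_mul 1 (2 * n) hstep.ne'
  · simpa only [hcrit, mul_div_assoc, add_zero] using
      ncard_image_mul_two_add_mul 0 (2 * n) hstep.ne'
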